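/- arXiv:2605.01339 — 2 statements merged into one kernel-verified Lean document; each statement's English description precedes it below -/
import Mathlib

section
/- Let U := {θ : Fin 2 → ℝ | 0 ≤ θ 0 ∧ θ 0 ≤ 1 ∧ 0 ≤ θ 1 ∧ θ 1 ≤ 1 ∧ θ 0 + θ 1 = 1} and let f(θ) := (θ 0 + θ 1)/2. Then: (i) for each coordinate i ∈ Fin 2, the image {θ i : θ ∈ U} equals the interval [0, 1]; (ii) f '' U = {1/2}, so sInf (f '' U) = sSup (f '' U) = 1/2; and (iii) sSup (f '' B) = 1 where B := {θ : Fin 2 → ℝ | 0 ≤ θ 0 ∧ θ 0 ≤ 1 ∧ 0 ≤ θ 1 ∧ θ 1 ≤ 1} is the bounding box of U. In particular the interval [sInf (f '' B), sSup (f '' B)] = [0, 1] is not contained in [sInf (f '' U), sSup (f '' U)] = {1/2}. -/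
lemma hU' : (fun θ : Fin 2 → ℝ => (θ 0 + θ 1) / 2) ''
    {θ : Fin 2 → ℝ | 0 ≤ θ 0 ∧ θ 0 ≤ 1 ∧ 0 ≤ θ 1 ∧ θ 1 ≤ 1 ∧ θ 0 + θ 1 = 1}
    = {(1 / 2 : ℝ)} := by
  ext x
  constructor
  · rintro ⟨θ, ⟨_, _, _, _, h⟩, rfl⟩
    simp [h]
  · rintro rfl
    exact ⟨![1/2, 1/2], by norm_num⟩

lemma hB' : (fun θ : Fin 2 → ℝ => (θ 0 + θ 1) / 2) ''
    {θ : Fin 2 → ℝ | 0 ≤ θ 0 ∧ θ 0 ≤ 1 ∧ 0 ≤ θ 1 ∧ θ 1 ≤ 1}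
    = Set.Icc (0:ℝ) 1 := by
  ext x
  constructor
  · rintro ⟨θ, ⟨h1, h2, h3, h4⟩, rfl⟩
    constructor <;> [linarith; linarith]
  · rintro ⟨h0, h1⟩
    exact ⟨![x, x], ⟨by simpa, by simpa, by simpa, by simpa⟩, by simp⟩

lemma hcoord' (i : Fin 2) : (fun θ : Fin 2 → ℝ => θ i) ''
    {θ : Fin 2 → ℝ | 0 ≤ θ 0 ∧ θ 0 ≤ 1 ∧ 0 ≤ θ 1 ∧ θ 1 ≤ 1 ∧ θ 0 + θ 1 = 1}
    = Set.Icc (0 : ℝ) 1 := by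
  ext x
  fin_cases i
  · constructor
    · rintro ⟨θ, ⟨h1, h2, _, _, _⟩, rfl⟩
      exact ⟨h1, h2⟩
    · rintro ⟨h0, h1⟩
      exact ⟨![x, 1 - x], ⟨by simpa, by simpa, by simp; linarith, by simp; linarith,
        by simp⟩, by simp⟩
  · constructor
    · rintro ⟨θ, ⟨_, _, h3, h4, _⟩, rfl⟩
      exact ⟨h3, h4⟩
    · rintro ⟨h0, h1⟩
      exact ⟨![1 - x, x], ⟨by simp; linarith, by simp; linarith, by simpa, by simpa,
        by simp⟩, by simp⟩

/-- Counterexample showing that the parameter-wise (bounding-box) projection can be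
strictly looser than the original interval: for
`U = {θ ∈ [0,1]² : θ₀ + θ₁ = 1}` and `f θ = (θ₀ + θ₁)/2`, each coordinate image of `U`
is `[0,1]`, `f '' U = {1/2}`, but the supremum of `f` over the bounding box `[0,1]²`
is `1`, so `[sInf (f '' B), sSup (f '' B)] = [0,1]` is not contained in `{1/2}`. -/
theorem stmt_8 :
    (∀ i : Fin 2, (fun θ : Fin 2 → ℝ => θ i) ''
        {θ : Fin 2 → ℝ | 0 ≤ θ 0 ∧ θ 0 ≤ 1 ∧ 0 ≤ θ 1 ∧ θ 1 ≤ 1 ∧ θ 0 + θ 1 = 1}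
        = Set.Icc (0 : ℝ) 1) ∧
    (fun θ : Fin 2 → ℝ => (θ 0 + θ 1) / 2) ''
        {θ : Fin 2 → ℝ | 0 ≤ θ 0 ∧ θ 0 ≤ 1 ∧ 0 ≤ θ 1 ∧ θ 1 ≤ 1 ∧ θ 0 + θ 1 = 1}
      = {(1 / 2 : ℝ)} ∧
    sInf ((fun θ : Fin 2 → ℝ => (θ 0 + θ 1) / 2) ''
        {θ : Fin 2 → ℝ | 0 ≤ θ 0 ∧ θ 0 ≤ 1 ∧ 0 ≤ θ 1 ∧ θ 1 ≤ 1 ∧ θ 0 + θ 1 = 1})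
      = 1 / 2 ∧
    sSup ((fun θ : Fin 2 → ℝ => (θ 0 + θ 1) / 2) ''
        {θ : Fin 2 → ℝ | 0 ≤ θ 0 ∧ θ 0 ≤ 1 ∧ 0 ≤ θ 1 ∧ θ 1 ≤ 1 ∧ θ 0 + θ 1 = 1})
      = 1 / 2 ∧
    sInf ((fun θ : Fin 2 → ℝ => (θ 0 + θ 1) / 2) ''
        {θ : Fin 2 → ℝ | 0 ≤ θ 0 ∧ θ 0 ≤ 1 ∧ 0 ≤ θ 1 ∧ θ 1 ≤ 1})
      = 0 ∧
    sSup ((fun θ : Fin 2 → ℝ => (θ 0 + θ 1) / 2) ''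
        {θ : Fin 2 → ℝ | 0 ≤ θ 0 ∧ θ 0 ≤ 1 ∧ 0 ≤ θ 1 ∧ θ 1 ≤ 1})
      = 1 ∧
    ¬ Set.Icc (0 : ℝ) 1 ⊆ {(1 / 2 : ℝ)} := by
  refine ⟨hcoord', hU', ?_, ?_, ?_, ?_, ?_⟩
  · rw [hU']; exact csInf_singleton _
  · rw [hU']; exact csSup_singleton _
  · rw [hB']; exact csInf_Icc (by norm_num)
  · rw [hB']; exact csSup_Icc (by norm_num)
  · intro h
    have := h (Set.mem_Icc.mpr ⟨le_refl 0, by norm_num⟩)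
    norm_num at this
end

section
/- Let a, b, c, d be real numbers with a ≤ b and c ≤ d. Then the convex hull (over ℝ) of the set {(x, y, x·y) : a ≤ x ≤ b, c ≤ y ≤ d} ⊆ ℝ × ℝ × ℝ equals the set {(x, y, z) : a ≤ x ≤ b ∧ c ≤ y ≤ d ∧ z ≥ c·x + a·y − a·c ∧ z ≥ d·x + b·y − b·d ∧ z ≤ c·x + b·y − b·c ∧ z ≤ d·x + a·y − a·d}. -/
lemma comb_mem {s : Set (ℝ × ℝ × ℝ)} {v1 v2 v3 v4 : ℝ × ℝ × ℝ}
    (h1 : v1 ∈ s) (h2 : v2 ∈ s) (h3 : v3 ∈ s) (h4 : v4 ∈ s)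
    {l1 l2 l3 l4 : ℝ} (hl1 : 0 ≤ l1) (hl2 : 0 ≤ l2) (hl3 : 0 ≤ l3) (hl4 : 0 ≤ l4)
    (hsum : l1 + l2 + l3 + l4 = 1) :
    l1 • v1 + l2 • v2 + l3 • v3 + l4 • v4 ∈ convexHull ℝ s := by
  have := (convex_convexHull ℝ s).sum_mem (t := (Finset.univ : Finset (Fin 4)))
    (w := ![l1, l2, l3, l4]) (z := ![v1, v2, v3, v4])
    (by intro i _; fin_cases i <;> simpa)
    (by simp [Fin.sum_univ_four]; linarith)
    (by intro i _; fin_cases i <;> simp <;>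
        [exact subset_convexHull ℝ s h1; exact subset_convexHull ℝ s h2;
         exact subset_convexHull ℝ s h3; exact subset_convexHull ℝ s h4])
  simpa [Fin.sum_univ_four] using this

/-- The McCormick inequalities, together with the box constraints, describe exactly
the convex hull of the graph of the bilinear function `z = x * y` over
`[a, b] × [c, d]`. -/
theorem stmt_11 (a b c d : ℝ) (hab : a ≤ b) (hcd : c ≤ d) :
    convexHull ℝ
        {p : ℝ × ℝ × ℝ | ∃ x y : ℝ,
          a ≤ x ∧ x ≤ b ∧ c ≤ y ∧ y ≤ d ∧ p = (x, y, x * y)}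
      = {p : ℝ × ℝ × ℝ |
          a ≤ p.1 ∧ p.1 ≤ b ∧ c ≤ p.2.1 ∧ p.2.1 ≤ d ∧
          c * p.1 + a * p.2.1 - a * c ≤ p.2.2 ∧
          d * p.1 + b * p.2.1 - b * d ≤ p.2.2 ∧
          p.2.2 ≤ c * p.1 + b * p.2.1 - b * c ∧
          p.2.2 ≤ d * p.1 + a * p.2.1 - a * d} := by
  set S : Set (ℝ × ℝ × ℝ) := {p : ℝ × ℝ × ℝ | ∃ x y : ℝ,
          a ≤ x ∧ x ≤ b ∧ c ≤ y ∧ y ≤ d ∧ p = (x, y, x * y)} with hS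
  apply le_antisymm
  · apply convexHull_min
    · rintro p ⟨x, y, hax, hxb, hcy, hyd, rfl⟩
      refine ⟨hax, hxb, hcy, hyd, ?_, ?_, ?_, ?_⟩ <;> dsimp only <;> nlinarith
    · rintro ⟨x1, y1, z1⟩ ⟨h1, h2, h3, h4, h5, h6, h7, h8⟩
        ⟨x2, y2, z2⟩ ⟨g1, g2, g3, g4, g5, g6, g7, g8⟩ α β hα hβ hαβ
      simp only [Set.mem_setOf_eq, Prod.smul_mk, Prod.mk_add_mk, smul_eq_mul] at *
      have e : ∀ r : ℝ, α * r + β * r = r := fun r => by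
        rw [← add_mul, hαβ, one_mul]
      refine ⟨?_, ?_, ?_, ?_, ?_, ?_, ?_, ?_⟩
      · linarith [mul_le_mul_of_nonneg_left h1 hα, mul_le_mul_of_nonneg_left g1 hβ, e a]
      · linarith [mul_le_mul_of_nonneg_left h2 hα, mul_le_mul_of_nonneg_left g2 hβ, e b]
      · linarith [mul_le_mul_of_nonneg_left h3 hα, mul_le_mul_of_nonneg_left g3 hβ, e c]
      · linarith [mul_le_mul_of_nonneg_left h4 hα, mul_le_mul_of_nonneg_left g4 hβ, e d]
      · linarith [mul_le_mul_of_nonneg_left h5 hα, mul_le_mul_of_nonneg_left g5 hβ, e (a*c)]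
      · linarith [mul_le_mul_of_nonneg_left h6 hα, mul_le_mul_of_nonneg_left g6 hβ, e (b*d)]
      · linarith [mul_le_mul_of_nonneg_left h7 hα, mul_le_mul_of_nonneg_left g7 hβ, e (b*c)]
      · linarith [mul_le_mul_of_nonneg_left h8 hα, mul_le_mul_of_nonneg_left g8 hβ, e (a*d)]
  · rintro ⟨x, y, z⟩ ⟨h1, h2, h3, h4, h5, h6, h7, h8⟩
    simp only [Set.mem_setOf_eq] at *
    rcases eq_or_lt_of_le hab with rfl | hab'
    · have hx : x = a := le_antisymm h2 h1
      subst hx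
      have hz : z = x * y := le_antisymm (by linarith) (by linarith)
      exact subset_convexHull ℝ S ⟨x, y, h1, h2, h3, h4, by rw [hz]⟩
    rcases eq_or_lt_of_le hcd with rfl | hcd'
    · have hy : y = c := le_antisymm h4 h3
      subst hy
      have hz : z = x * y := le_antisymm (by linarith) (by linarith)
      exact subset_convexHull ℝ S ⟨x, y, h1, h2, h3, h4, by rw [hz]⟩
    · have hba : (0:ℝ) < b - a := by linarith
      have hdc : (0:ℝ) < d - c := by linarith
      have hD : (0:ℝ) < (b - a) * (d - c) := mul_pos hba hdc
      set s : ℝ := (b - x) / (b - a) with hs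
      set t : ℝ := (d - y) / (d - c) with ht
      set u : ℝ := (z - (d * x + b * y - b * d)) / ((b - a) * (d - c)) with hu
      have hsx : s * (b - a) = b - x := by
        rw [hs, div_mul_cancel₀ _ hba.ne']
      have hty : t * (d - c) = d - y := by
        rw [ht, div_mul_cancel₀ _ hdc.ne']
      have huz : u * ((b - a) * (d - c)) = z - (d * x + b * y - b * d) := by
        rw [hu, div_mul_cancel₀ _ hD.ne']
      have hl1 : 0 ≤ u := by
        rw [hu]; apply div_nonneg _ hD.le; linarith
      have hl2 : 0 ≤ s - u := by
        have e2 : (s - u) * ((b - a) * (d - c)) = (c * x + b * y - b * c) - z := by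
          linear_combination (d - c) * hsx - huz
        have h' : 0 ≤ (s - u) * ((b - a) * (d - c)) := by rw [e2]; linarith
        exact (mul_nonneg_iff_of_pos_right hD).mp h'
      have hl3 : 0 ≤ t - u := by
        have e3 : (t - u) * ((b - a) * (d - c)) = (d * x + a * y - a * d) - z := by
          linear_combination (b - a) * hty - huz
        have h' : 0 ≤ (t - u) * ((b - a) * (d - c)) := by rw [e3]; linarith
        exact (mul_nonneg_iff_of_pos_right hD).mp h'
      have hl4 : 0 ≤ 1 - s - t + u := by
        have e4 : (1 - s - t + u) * ((b - a) * (d - c)) = z - (c * x + a * y - a * c) := by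
          linear_combination (-(d - c)) * hsx - (b - a) * hty + huz
        have h' : 0 ≤ (1 - s - t + u) * ((b - a) * (d - c)) := by rw [e4]; linarith
        exact (mul_nonneg_iff_of_pos_right hD).mp h'
      have hsum : u + (s - u) + (t - u) + (1 - s - t + u) = 1 := by ring
      have key : ((x, y, z) : ℝ × ℝ × ℝ) =
          u • ((a, c, a * c) : ℝ × ℝ × ℝ) + (s - u) • (a, d, a * d)
            + (t - u) • (b, c, b * c) + (1 - s - t + u) • (b, d, b * d) := by
        simp only [Prod.smul_mk, Prod.mk_add_mk, smul_eq_mul, Prod.mk.injEq]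
        refine ⟨by linear_combination hsx, by linear_combination hty,
          by linear_combination -huz + d * hsx + b * hty⟩
      rw [key]
      exact comb_mem (⟨a, c, le_refl a, hab, le_refl c, hcd, rfl⟩ : _ ∈ S)
        (⟨a, d, le_refl a, hab, hcd, le_refl d, rfl⟩ : _ ∈ S)
        (⟨b, c, hab, le_refl b, le_refl c, hcd, rfl⟩ : _ ∈ S)
        (⟨b, d, hab, le_refl b, hcd, le_refl d, rfl⟩ : _ ∈ S)
        hl1 hl2 hl3 hl4 hsum
end
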